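/- For every odd integer c ≥ 3, one has Σ_{h=1}^{(c−1)/2} 1/sin(πh/c) ≤ (c/π) · (1 + log((c−1)/2)) / (1 − π²/24). -/
import Mathlib

theorem stmt18 (c : ℕ) (hc : 3 ≤ c) (hodd : Odd c) :
    ∑ h ∈ Finset.Icc 1 ((c - 1) / 2), 1 / Real.sin (Real.pi * (h : ℝ) / (c : ℝ)) ≤
      ((c : ℝ) / Real.pi) * (1 + Real.log (((c : ℝ) - 1) / 2)) / (1 - Real.pi ^ 2 / 24) := by
  set m := (c - 1) / 2 with hm
  have hc0 : (0 : ℝ) < c := by positivity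
  have hpi := Real.pi_pos
  have hmcast : (m : ℝ) = ((c : ℝ) - 1) / 2 := by
    obtain ⟨k, hk⟩ := hodd
    subst hk
    have hmk : m = k := by omega
    rw [hmk]
    push_cast
    ring
  have hm1 : 1 ≤ m := by omega
  have step1 : ∑ h ∈ Finset.Icc 1 m, 1 / Real.sin (Real.pi * (h : ℝ) / (c : ℝ)) ≤
      ∑ h ∈ Finset.Icc 1 m, (c : ℝ) / 2 * (h : ℝ)⁻¹ := by
    apply Finset.sum_le_sum
    intro h hh
    rw [Finset.mem_Icc] at hh
    have hh1 : (1 : ℝ) ≤ h := by exact_mod_cast hh.1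
    have hh2 : 2 * (h : ℝ) ≤ (c : ℝ) - 1 := by
      have h2 : 2 * h + 1 ≤ c := by omega
      have h3 := (Nat.cast_le (α := ℝ)).2 h2
      push_cast at h3
      linarith
    have hx0 : 0 < Real.pi * (h : ℝ) / (c : ℝ) := by positivity
    have hx2 : Real.pi * (h : ℝ) / (c : ℝ) ≤ Real.pi / 2 := by
      rw [div_le_div_iff₀ hc0 (by norm_num)]
      nlinarith
    have hsin : 2 / Real.pi * (Real.pi * (h : ℝ) / (c : ℝ)) ≤
        Real.sin (Real.pi * (h : ℝ) / (c : ℝ)) := Real.mul_le_sin hx0.le hx2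
    have hval : 2 / Real.pi * (Real.pi * (h : ℝ) / (c : ℝ)) = 2 * (h : ℝ) / (c : ℝ) := by
      field_simp
    rw [hval] at hsin
    have hq : (0 : ℝ) < 2 * (h : ℝ) / (c : ℝ) := by positivity
    calc 1 / Real.sin (Real.pi * (h : ℝ) / (c : ℝ))
        ≤ 1 / (2 * (h : ℝ) / (c : ℝ)) := one_div_le_one_div_of_le hq hsin
      _ = (c : ℝ) / 2 * (h : ℝ)⁻¹ := by
          field_simp
  have step2 : ∑ h ∈ Finset.Icc 1 m, (c : ℝ) / 2 * (h : ℝ)⁻¹ ≤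
      (c : ℝ) / 2 * (1 + Real.log m) := by
    rw [← Finset.mul_sum]
    apply mul_le_mul_of_nonneg_left _ (by positivity)
    have hharm : ∑ h ∈ Finset.Icc 1 m, ((h : ℝ))⁻¹ = ((harmonic m : ℚ) : ℝ) := by
      rw [harmonic_eq_sum_Icc]
      push_cast
      rfl
    rw [hharm]
    exact harmonic_le_one_add_log m
  have hA : (1 : ℝ) ≤ 1 + Real.log m := by
    have : (0 : ℝ) ≤ Real.log m := Real.log_nonneg (by exact_mod_cast hm1)
    linarith
  have hpi2 : Real.pi < 3.15 := Real.pi_lt_d2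
  have hpi1 : 3.14 < Real.pi := by linarith [Real.pi_gt_d6]
  have hden : (0 : ℝ) < 1 - Real.pi ^ 2 / 24 := by nlinarith
  have step3 : (c : ℝ) / 2 * (1 + Real.log m) ≤
      ((c : ℝ) / Real.pi) * (1 + Real.log m) / (1 - Real.pi ^ 2 / 24) := by
    rw [le_div_iff₀ hden]
    have key : Real.pi * (1 - Real.pi ^ 2 / 24) ≤ 2 := by nlinarith
    have hAc : (0 : ℝ) ≤ (c : ℝ) * (1 + Real.log m) := by positivity
    have := mul_le_mul_of_nonneg_left key hAc
    have h2 : (c : ℝ) / Real.pi * (1 + Real.log m) = (c : ℝ) * (1 + Real.log m) / Real.pi := by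
      ring
    rw [h2, le_div_iff₀ hpi]
    nlinarith
  calc ∑ h ∈ Finset.Icc 1 m, 1 / Real.sin (Real.pi * (h : ℝ) / (c : ℝ))
      ≤ ∑ h ∈ Finset.Icc 1 m, (c : ℝ) / 2 * (h : ℝ)⁻¹ := step1
    _ ≤ (c : ℝ) / 2 * (1 + Real.log (m : ℝ)) := step2
    _ ≤ _ := by rw [hmcast] at step3; rw [hmcast]; exact step3
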